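/- arXiv:0905.1304 — 2 statements merged into one kernel-verified Lean document; each statement's English description precedes it below -/
import Mathlib

section
/- For every Young diagram λ and every integer m ≥ 1, the super power sum in the modified Frobenius coordinates satisfies Σ_{i=1}^{d(λ)} (a_i^m − (−b_i)^m) = Σ_{k=0}^{⌊(m−1)/2⌋} 2^{−2k} · C(m, 2k+1) · p̂_{m−1−2k}(λ), where C(m, 2k+1) is a binomial coefficient. -/
open scoped BigOperators Classical

/-- Number of diagonal boxes `d(λ)`. -/
def dDiag (lam : YoungDiagram) : ℕ :=
  ((Finset.range (lam.colLen 0)).filter fun i => i < lam.rowLen i).card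

/-- Modified Frobenius coordinate `a_{i+1} = λ_{i+1} - (i+1) + 1/2` (zero-based `i`). -/
noncomputable def aFrob (lam : YoungDiagram) (i : ℕ) : ℝ :=
  (lam.rowLen i : ℝ) - ((i : ℝ) + 1) + 1 / 2

/-- Modified Frobenius coordinate `b_{i+1} = λ′_{i+1} - (i+1) + 1/2` (zero-based `i`). -/
noncomputable def bFrob (lam : YoungDiagram) (i : ℕ) : ℝ :=
  (lam.colLen i : ℝ) - ((i : ℝ) + 1) + 1 / 2

/-- Content power sums: `p̂_r(λ) = ∑_{□∈λ} c(□)^r` (so `p̂_0(λ) = |λ|`). -/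
noncomputable def phat (r : ℕ) (lam : YoungDiagram) : ℝ :=
  ∑ c ∈ lam.cells, ((c.2 : ℝ) - (c.1 : ℝ)) ^ r

/-!
A cell of content `c` contributes `(c + 1/2)^m - (c - 1/2)^m`, which by the binomial theorem is
`∑_k 2^{-2k} C(m, 2k+1) c^{m-1-2k}`; summed over `λ` this is the right-hand side. Cutting `λ` into
the hooks of its diagonal cells instead, the contents along the arm of the `i`-th hook run through
`0, …, λ_i - i - 1` and along its leg through `-1, …, -(λ'_i - i - 1)`, so the contributions of
each hook telescope to `a_i^m - (-b_i)^m`.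
-/

open Finset

theorem add_half_pow_sub_sub_half_pow {K : Type*} [Field K] [NeZero (2 : K)] (x : K) (m : ℕ) :
    (x + 1 / 2) ^ m - (x - 1 / 2) ^ m
      = ∑ k ∈ range ((m - 1) / 2 + 1),
          ((2 : K) ^ (2 * k))⁻¹ * (m.choose (2 * k + 1) : K) * x ^ (m - 1 - 2 * k) := by
  rcases m with _ | n
  · simp
  have expand : (x + 1 / 2) ^ (n + 1) - (x - 1 / 2) ^ (n + 1)
      = ∑ j ∈ range (n + 2), ((1 / 2 : K) ^ j - (-(1 / 2)) ^ j) * x ^ (n + 1 - j) *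
          ((n + 1).choose j : K) := by
    rw [add_comm x, sub_eq_neg_add x, add_pow, add_pow, ← sum_sub_distrib]
    exact sum_congr rfl fun j _ => by ring
  have odd_of_ne_zero : ∀ j ∈ range (n + 2),
      ((1 / 2 : K) ^ j - (-(1 / 2)) ^ j) * x ^ (n + 1 - j) * ((n + 1).choose j : K) ≠ 0 →
        Odd j := by
    intro j _ hj
    contrapose! hj
    simp [(Nat.not_odd_iff_even.mp hj).neg_pow]
  rw [expand, ← sum_filter_of_ne odd_of_ne_zero]
  symm
  refine sum_nbij' (fun k => 2 * k + 1) (fun j => j / 2) ?_ ?_ ?_ ?_ ?_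
  · intro k hk
    simp only [mem_filter, mem_range] at hk ⊢
    exact ⟨by omega, odd_two_mul_add_one k⟩
  · intro j hj
    obtain ⟨hj, k, rfl⟩ := mem_filter.mp hj
    simp only [mem_range] at hj ⊢
    omega
  · intro k _
    omega
  · intro j hj
    obtain ⟨k, rfl⟩ := (mem_filter.mp hj).2
    omega
  · intro k _
    rw [(odd_two_mul_add_one k).neg_pow, show n + 1 - (2 * k + 1) = n + 1 - 1 - 2 * k by omega,
      one_div, inv_pow, pow_succ]
    field_simp
    ring

theorem lt_card_filter_range_iff {p : ℕ → Prop} [DecidablePred p]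
    (hp : ∀ ⦃i j⦄, i ≤ j → p j → p i) {N i : ℕ} :
    i < ((range N).filter p).card ↔ i < N ∧ p i := by
  constructor
  · intro hi
    by_contra hpi
    have : (range N).filter p ⊆ range i := fun j hj => by
      rw [mem_filter, mem_range] at hj
      rw [mem_range]
      by_contra hij
      exact hpi ⟨by omega, hp (not_lt.mp hij) hj.2⟩
    simpa using (card_le_card this).trans_lt' hi
  · rintro ⟨hiN, hpi⟩
    have : range (i + 1) ⊆ (range N).filter p := fun j hj => by
      rw [mem_range] at hj
      exact mem_filter.mpr ⟨mem_range.mpr (by omega), hp (by omega) hpi⟩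
    simpa using card_le_card this

namespace YoungDiagram

theorem lt_dDiag_iff {lam : YoungDiagram} {i : ℕ} : i < dDiag lam ↔ (i, i) ∈ lam := by
  rw [dDiag, lt_card_filter_range_iff, ← mem_iff_lt_rowLen, ← mem_iff_lt_colLen]
  · exact ⟨And.right, fun h => ⟨lam.up_left_mem le_rfl (Nat.zero_le _) h, h⟩⟩
  · intro i j hij hj
    rw [← mem_iff_lt_rowLen] at hj ⊢
    exact lam.up_left_mem hij hij hj

theorem sum_hook_content_sub {M : Type*} [AddCommGroup M] (F : ℝ → M) {lam : YoungDiagram}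
    {i : ℕ} (hi : (i, i) ∈ lam) :
    ∑ j ∈ Ico i (lam.rowLen i), (F ((j : ℝ) - i + 1 / 2) - F ((j : ℝ) - i - 1 / 2))
      + ∑ k ∈ Ico (i + 1) (lam.colLen i), (F ((i : ℝ) - k + 1 / 2) - F ((i : ℝ) - k - 1 / 2))
      = F (aFrob lam i) - F (-bFrob lam i) := by
  have arm : ∑ j ∈ Ico i (lam.rowLen i), (F ((j : ℝ) - i + 1 / 2) - F ((j : ℝ) - i - 1 / 2))
      = F (aFrob lam i) - F (-(1 / 2)) := by
    let f (j : ℕ) : M := F ((j : ℝ) - i - 1 / 2)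
    calc _ = ∑ j ∈ Ico i (lam.rowLen i), (f (j + 1) - f j) :=
          sum_congr rfl fun j _ => by simp only [f]; push_cast; ring_nf
      _ = f (lam.rowLen i) - f i := sum_Ico_sub f (mem_iff_lt_rowLen.mp hi).le
      _ = _ := by simp only [f, aFrob]; ring_nf
  have leg : ∑ k ∈ Ico (i + 1) (lam.colLen i), (F ((i : ℝ) - k + 1 / 2) - F ((i : ℝ) - k - 1 / 2))
      = F (-(1 / 2)) - F (-bFrob lam i) := by
    let f (k : ℕ) : M := F ((i : ℝ) - k + 1 / 2)
    calc _ = -∑ k ∈ Ico (i + 1) (lam.colLen i), (f (k + 1) - f k) := by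
          rw [← sum_neg_distrib]
          exact sum_congr rfl fun k _ => by simp only [f]; push_cast; ring_nf; abel
      _ = -(f (lam.colLen i) - f (i + 1)) := by rw [sum_Ico_sub f (mem_iff_lt_colLen.mp hi)]
      _ = _ := by simp only [f, bFrob]; push_cast; ring_nf; abel
  rw [arm, leg, sub_add_sub_cancel]

theorem sum_cells_content_sub {M : Type*} [AddCommGroup M] (F : ℝ → M) (lam : YoungDiagram) :
    ∑ c ∈ lam.cells, (F ((c.2 : ℝ) - c.1 + 1 / 2) - F ((c.2 : ℝ) - c.1 - 1 / 2))
      = ∑ i ∈ range (dDiag lam), (F (aFrob lam i) - F (-bFrob lam i)) := by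
  have upper : ∀ c : ℕ × ℕ, c ∈ lam.cells.filter (fun c => c.1 ≤ c.2) ↔
      c.1 ∈ range (dDiag lam) ∧ c.2 ∈ Ico c.1 (lam.rowLen c.1) := by
    rintro ⟨i, j⟩
    simp only [mem_filter, mem_cells, mem_range, lt_dDiag_iff, mem_Ico, mem_iff_lt_rowLen]
    omega
  have lower : ∀ c : ℕ × ℕ, c ∈ lam.cells.filter (fun c => ¬c.1 ≤ c.2) ↔
      c.2 ∈ range (dDiag lam) ∧ c.1 ∈ Ico (c.2 + 1) (lam.colLen c.2) := by
    rintro ⟨k, i⟩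
    simp only [mem_filter, mem_cells, mem_range, lt_dDiag_iff, mem_Ico, mem_iff_lt_colLen]
    omega
  rw [← sum_filter_add_sum_filter_not _ (fun c => c.1 ≤ c.2),
    sum_finset_product _ _ (fun i => Ico i (lam.rowLen i)) upper,
    sum_finset_product_right _ _ (fun i => Ico (i + 1) (lam.colLen i)) lower, ← sum_add_distrib]
  exact sum_congr rfl fun i hi => sum_hook_content_sub F (lt_dDiag_iff.mp (mem_range.mp hi))

end YoungDiagram

theorem super_power_sum_frobenius_eq_content_sum_general (lam : YoungDiagram) (m : ℕ) :
    ∑ i ∈ Finset.range (dDiag lam), (aFrob lam i ^ m - (-bFrob lam i) ^ m)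
      = ∑ k ∈ Finset.range ((m - 1) / 2 + 1),
          ((2 : ℝ) ^ (2 * k))⁻¹ * (m.choose (2 * k + 1) : ℝ) * phat (m - 1 - 2 * k) lam := by
  calc _ = ∑ c ∈ lam.cells, (((c.2 : ℝ) - c.1 + 1 / 2) ^ m - ((c.2 : ℝ) - c.1 - 1 / 2) ^ m) :=
        (lam.sum_cells_content_sub (· ^ m)).symm
    _ = ∑ c ∈ lam.cells, ∑ k ∈ range ((m - 1) / 2 + 1),
          ((2 : ℝ) ^ (2 * k))⁻¹ * (m.choose (2 * k + 1) : ℝ) * ((c.2 : ℝ) - c.1) ^ (m - 1 - 2 * k) :=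
        sum_congr rfl fun c _ => add_half_pow_sub_sub_half_pow _ m
    _ = _ := by
        simp only [phat, mul_sum]
        exact sum_comm

/-- The super power sums in the modified Frobenius coordinates expand in the content
power sums: `∑_i (a_i^m - (-b_i)^m) = ∑_k 2^{-2k} C(m,2k+1) p̂_{m-1-2k}(λ)`. -/
theorem super_power_sum_frobenius_eq_content_sum (lam : YoungDiagram) (m : ℕ) (hm : 1 ≤ m) :
    ∑ i ∈ Finset.range (dDiag lam), (aFrob lam i ^ m - (-bFrob lam i) ^ m)
      = ∑ k ∈ Finset.range ((m - 1) / 2 + 1),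
          ((2 : ℝ) ^ (2 * k))⁻¹ * (m.choose (2 * k + 1) : ℝ) * phat (m - 1 - 2 * k) lam :=
  super_power_sum_frobenius_eq_content_sum_general lam m
end

section
/- Fix θ > 0. For every integer m ≥ 2, the function p̃_m : Y → ℝ defined by p̃_m(λ) = Σ_{i=1}^{d}(x_i)^m − Σ_{j=1}^{d−1}(y_j)^m (super power sums in the Kerov interlacing coordinates of λ with parameter θ) belongs to the algebra A_θ of θ-regular functions; more precisely, there exist real constants α_1,…,α_{m−2} (depending on θ and m but not on λ) such that p̃_m = θ·m·p*_{m−1;θ} + Σ_{l=1}^{m−2} α_l · p*_{l;θ} as functions on Y. In particular p̃_m ∈ A_θ^(m−1). -/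
open scoped BigOperators Classical

/-- `p*_{m;θ}(λ) = ∑_{i=1}^{ℓ(λ)} [(λ_i - θi)^m - (-θi)^m]` (1-based rows). -/
noncomputable def pstarTheta (θ : ℝ) (m : ℕ) (lam : YoungDiagram) : ℝ :=
  ∑ i ∈ Finset.range (lam.colLen 0),
    (((lam.rowLen i : ℝ) - θ * ((i : ℝ) + 1)) ^ m - (-(θ * ((i : ℝ) + 1))) ^ m)

/-- The algebra `A_θ` of θ-regular functions, generated by the `p*_{m;θ}`, `m ≥ 1`. -/
noncomputable def regularAlgTheta (θ : ℝ) : Subalgebra ℝ (YoungDiagram → ℝ) :=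
  Algebra.adjoin ℝ {f | ∃ m : ℕ, 1 ≤ m ∧ f = pstarTheta θ m}

/-- The filtration term `A_θ^(d)`. -/
noncomputable def AfilTheta (θ : ℝ) (d : ℕ) : Submodule ℝ (YoungDiagram → ℝ) :=
  Submodule.span ℝ {f | ∃ r : ℕ →₀ ℕ, r 0 = 0 ∧ (r.sum fun m k => m * k) ≤ d ∧
    f = r.prod fun m k => pstarTheta θ m ^ k}

/-- The increasing list `t_1 < ⋯ < t_{d-1}` of row indices `r ≥ 1` with `λ_r > λ_{r+1}`. -/
def kerovT (lam : YoungDiagram) : List ℕ :=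
  ((Finset.Icc 1 (lam.colLen 0)).filter fun r => lam.rowLen r < lam.rowLen (r - 1)).sort (· ≤ ·)

/-- The number `d` of inner corners of `λ`. -/
def kerovD (lam : YoungDiagram) : ℕ := (kerovT lam).length + 1

/-- Kerov interlacing coordinate `x_i` (with parameter `θ`), `1 ≤ i ≤ d`:
`x_1 = λ_1` and `x_{k+1} = λ_{t_k + 1} - θ t_k`. -/
noncomputable def kerovX (θ : ℝ) (lam : YoungDiagram) (i : ℕ) : ℝ :=
  if i ≤ 1 then (lam.rowLen 0 : ℝ)
  else (lam.rowLen ((kerovT lam).getD (i - 2) 0) : ℝ) - θ * ((kerovT lam).getD (i - 2) 0 : ℕ)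

/-- Kerov interlacing coordinate `y_k = λ_{t_k} - θ t_k` (with parameter `θ`), `1 ≤ k ≤ d-1`. -/
noncomputable def kerovY (θ : ℝ) (lam : YoungDiagram) (j : ℕ) : ℝ :=
  (lam.rowLen ((kerovT lam).getD (j - 1) 0 - 1) : ℝ) - θ * ((kerovT lam).getD (j - 1) 0 : ℕ)

/-- The coefficient `π_i^↑(λ) = ∏_{j=1}^{d-1}(x_i - y_j) / ∏_{l ≠ i}(x_i - x_l)`. -/
noncomputable def kerovPi (θ : ℝ) (lam : YoungDiagram) (i : ℕ) : ℝ :=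
  (∏ j ∈ Finset.Icc 1 (kerovD lam - 1), (kerovX θ lam i - kerovY θ lam j)) /
  (∏ l ∈ (Finset.Icc 1 (kerovD lam)).erase i, (kerovX θ lam i - kerovX θ lam l))

/-- The transition function `p^↑_θ(λ,ν)`: equals `π_i^↑(λ)` if `ν = λ ∪ □_i` covers `λ`
(where `□_i` is the addable box at the `i`-th inner corner), and `0` otherwise. -/
noncomputable def transUp (θ : ℝ) (lam nu : YoungDiagram) : ℝ :=
  if lam ≤ nu ∧ nu.card = lam.card + 1 then
    -- the (zero-based) row of the added box
    let r := sInf {r : ℕ | lam.rowLen r ≠ nu.rowLen r}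
    kerovPi θ lam (if r = 0 then 1 else (kerovT lam).idxOf r + 2)
  else 0

/-- The marginal distributions `M′_{n;θ}` of Kerov's growth process:
`M′_{0;θ}(∅) = 1`, `M′_{n+1;θ}(ν) = ∑_{λ∈Y_n, λ⊂ν} M′_{n;θ}(λ) p^↑_θ(λ,ν)`. -/
noncomputable def Mgrowth (θ : ℝ) : ℕ → YoungDiagram → ℝ
  | 0 => fun lam => if lam = ⊥ then 1 else 0
  | n + 1 => fun nu =>
      ∑ᶠ lam ∈ {lam : YoungDiagram | lam.card = n ∧ lam ≤ nu},
        Mgrowth θ n lam * transUp θ lam nu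

/-- `h_m(λ)`: the coefficient of `u^{-m}` in the expansion of
`H_θ(u;λ) = u ∏_j (u-y_j) / ∏_i (u-x_i)` at `u = ∞`; substituting `u = 1/t`,
this is the coefficient of `t^m` in `∏_j (1 - y_j t) / ∏_i (1 - x_i t)`. -/
noncomputable def hCoeff (θ : ℝ) (lam : YoungDiagram) (m : ℕ) : ℝ :=
  PowerSeries.coeff (R := ℝ) m
    ((∏ j ∈ Finset.Icc 1 (kerovD lam - 1),
        (1 - PowerSeries.C (R := ℝ) (kerovY θ lam j) * PowerSeries.X)) *
     (∏ i ∈ Finset.Icc 1 (kerovD lam),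
        (1 - PowerSeries.C (R := ℝ) (kerovX θ lam i) * PowerSeries.X))⁻¹)

/-- Super power sums in the Kerov interlacing coordinates:
`p̃_m(λ) = ∑_{i=1}^d x_i^m - ∑_{j=1}^{d-1} y_j^m`. -/
noncomputable def ptilde (θ : ℝ) (m : ℕ) (lam : YoungDiagram) : ℝ :=
  ∑ i ∈ Finset.Icc 1 (kerovD lam), kerovX θ lam i ^ m
    - ∑ j ∈ Finset.Icc 1 (kerovD lam - 1), kerovY θ lam j ^ m

/-- The operator `∂`: `(∂F)(λ) = -F(λ) + ∑_{ν ⊃ λ, |ν|=|λ|+1} p^↑_θ(λ,ν) F(ν)`. -/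
noncomputable def delOp (θ : ℝ) (F : YoungDiagram → ℝ) (lam : YoungDiagram) : ℝ :=
  -F lam + ∑ᶠ nu ∈ {nu : YoungDiagram | lam ≤ nu ∧ nu.card = lam.card + 1},
    transUp θ lam nu * F nu

/-!
Between two consecutive corners all rows have the same length, so the alternating sum over the
interlacing coordinates telescopes into a sum over all rows: with `g(z) = (z + θ)^m - z^m`,
row `i` contributes `g(λ_i - θ i) - g(-θ i)`. Expanding `g` binomially gives
`p̃_m = ∑_{k<m} C(m,k) θ^{m-k} p*_{k;θ}`, whose top term is `θ m p*_{m-1;θ}` and whose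
`k = 0` term vanishes.
-/

open Finset

theorem Finset.sum_Icc_one_eq_sum_range {M : Type*} [AddCommMonoid M] (f : ℕ → M) (n : ℕ) :
    ∑ i ∈ Icc 1 n, f i = ∑ i ∈ range n, f (i + 1) := by
  rw [← Finset.Ico_add_one_right_eq_Icc, sum_Ico_eq_sum_range, Nat.add_sub_cancel]
  simp only [add_comm 1]

theorem Finset.sum_sort_getD {M : Type*} [AddCommMonoid M] (s : Finset ℕ) (g : ℕ → M) :
    ∑ j ∈ range (s.sort (· ≤ ·)).length, g ((s.sort (· ≤ ·)).getD j 0) = ∑ r ∈ s, g r := by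
  rw [← sum_map_toList s, ← ((s.sort_perm_toList (· ≤ ·)).map g).sum_eq,
    ← Fin.sum_univ_fun_getElem, sum_range]
  simp only [Fin.is_lt, List.getD_eq_getElem]

theorem add_pow_sub_pow_eq_sum {R : Type*} [CommRing R] (x y : R) (m : ℕ) :
    (x + y) ^ m - x ^ m = ∑ k ∈ range m, m.choose k * y ^ (m - k) * x ^ k := by
  rw [add_pow, sum_range_succ]
  simp only [Nat.choose_self, Nat.sub_self, pow_zero, Nat.cast_one, mul_one, add_sub_cancel_right]
  exact sum_congr rfl fun k _ => by ring

theorem YoungDiagram.rowLen_colLen_zero (μ : YoungDiagram) : μ.rowLen (μ.colLen 0) = 0 := by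
  by_contra h
  exact lt_irrefl _ (YoungDiagram.mem_iff_lt_colLen.mp
    (YoungDiagram.mem_iff_lt_rowLen.mpr (Nat.pos_of_ne_zero h)))

def kerovCorners (lam : YoungDiagram) : Finset ℕ :=
  (Icc 1 (lam.colLen 0)).filter fun r => lam.rowLen r < lam.rowLen (r - 1)

section KerovCoordinates

variable (θ : ℝ) {m : ℕ} (lam : YoungDiagram)

theorem kerovT_eq_sort : kerovT lam = (kerovCorners lam).sort (· ≤ ·) := rfl

theorem sum_kerovX_pow : ∑ i ∈ Icc 1 (kerovD lam), kerovX θ lam i ^ m =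
    (lam.rowLen 0 : ℝ) ^ m + ∑ r ∈ kerovCorners lam, ((lam.rowLen r : ℝ) - θ * r) ^ m := by
  rw [kerovD, sum_Icc_one_eq_sum_range, sum_range_succ', add_comm,
    ← sum_sort_getD (kerovCorners lam), ← kerovT_eq_sort]
  simp [kerovX]

theorem sum_kerovY_pow : ∑ j ∈ Icc 1 (kerovD lam - 1), kerovY θ lam j ^ m =
    ∑ r ∈ kerovCorners lam, ((lam.rowLen (r - 1) : ℝ) - θ * r) ^ m := by
  rw [kerovD, Nat.add_sub_cancel, sum_Icc_one_eq_sum_range, ← sum_sort_getD (kerovCorners lam),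
    ← kerovT_eq_sort]
  simp [kerovY]

theorem ptilde_eq_sum_Icc : ptilde θ m lam = (lam.rowLen 0 : ℝ) ^ m +
    ∑ r ∈ Icc 1 (lam.colLen 0),
      (((lam.rowLen r : ℝ) - θ * r) ^ m - ((lam.rowLen (r - 1) : ℝ) - θ * r) ^ m) := by
  rw [ptilde, sum_kerovX_pow, sum_kerovY_pow, add_sub_assoc, ← sum_sub_distrib, kerovCorners,
    sum_filter_of_ne]
  intro r hr hne
  contrapose! hne
  rw [le_antisymm (lam.rowLen_anti _ _ (Nat.sub_le r 1)) hne, sub_self]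

theorem ptilde_eq_sum_rows (hm : m ≠ 0) : ptilde θ m lam = ∑ i ∈ range (lam.colLen 0),
    ((((lam.rowLen i : ℝ) - θ * (i + 1) + θ) ^ m - ((lam.rowLen i : ℝ) - θ * (i + 1)) ^ m) -
      ((-(θ * (i + 1)) + θ) ^ m - (-(θ * (i + 1))) ^ m)) := by
  set ℓ := lam.colLen 0
  set U : ℕ → ℝ := fun r => ((lam.rowLen r : ℝ) - θ * r) ^ m
  set W : ℕ → ℝ := fun r => ((lam.rowLen r : ℝ) - θ * (r + 1)) ^ m
  set B : ℕ → ℝ := fun r => (-(θ * r)) ^ m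
  have hrow : ∀ i : ℕ, (((lam.rowLen i : ℝ) - θ * (i + 1) + θ) ^ m -
      ((lam.rowLen i : ℝ) - θ * (i + 1)) ^ m) - ((-(θ * (i + 1)) + θ) ^ m - (-(θ * (i + 1))) ^ m)
      = (U i - W i) + (B (i + 1) - B i) := fun i => by simp only [U, W, B]; push_cast; ring
  have hreindex : ∀ i : ℕ, ((lam.rowLen (i + 1) : ℝ) - θ * ((i + 1 : ℕ) : ℝ)) ^ m
      - ((lam.rowLen (i + 1 - 1) : ℝ) - θ * ((i + 1 : ℕ) : ℝ)) ^ m = U (i + 1) - W i := fun i => by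
    simp only [U, W, Nat.add_sub_cancel]; push_cast; ring
  have hshift := (sum_range_succ' U ℓ).symm.trans (sum_range_succ U ℓ)
  have hUB : U ℓ = B ℓ := by simp [U, B, ℓ, YoungDiagram.rowLen_colLen_zero]
  have hU0 : U 0 = (lam.rowLen 0 : ℝ) ^ m := by simp [U]
  have hB0 : B 0 = 0 := by simp [B, hm]
  rw [ptilde_eq_sum_Icc, sum_Icc_one_eq_sum_range, sum_congr rfl fun i _ => hreindex i,
    sum_congr rfl fun i _ => hrow i, sum_add_distrib, sum_range_sub B, sum_sub_distrib,
    sum_sub_distrib]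
  linarith

theorem ptilde_eq_sum_choose_mul_pstarTheta (hm : m ≠ 0) :
    ptilde θ m lam = ∑ k ∈ range m, m.choose k * θ ^ (m - k) * pstarTheta θ k lam := by
  simp only [ptilde_eq_sum_rows θ lam hm, add_pow_sub_pow_eq_sum, ← sum_sub_distrib, pstarTheta,
    mul_sum, mul_sub]
  exact sum_comm

end KerovCoordinates

theorem pstarTheta_zero (θ : ℝ) : pstarTheta θ 0 = 0 := by
  funext lam
  simp [pstarTheta]

theorem pstarTheta_mem_AfilTheta (θ : ℝ) {k d : ℕ} (hkd : k ≤ d) :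
    pstarTheta θ k ∈ AfilTheta θ d := by
  rcases Nat.eq_zero_or_pos k with rfl | hk
  · exact pstarTheta_zero θ ▸ zero_mem _
  refine Submodule.subset_span ⟨Finsupp.single k 1, Finsupp.single_eq_of_ne hk.ne, ?_, ?_⟩
  · simpa [Finsupp.sum_single_index] using hkd
  · simp [Finsupp.prod_single_index]

theorem ptilde_eq_theta_regular_general (θ : ℝ) (m : ℕ) (hm : 2 ≤ m) :
    (∃ α : ℕ → ℝ, ∀ lam : YoungDiagram,
      ptilde θ m lam = θ * (m : ℝ) * pstarTheta θ (m - 1) lam +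
        ∑ l ∈ Finset.Icc 1 (m - 2), α l * pstarTheta θ l lam) ∧
    ptilde θ m ∈ AfilTheta θ (m - 1) := by
  obtain ⟨n, rfl⟩ : ∃ n, m = n + 2 := ⟨m - 2, by omega⟩
  set α : ℕ → ℝ := fun k => (n + 2).choose k * θ ^ (n + 2 - k)
  have hexpand (lam : YoungDiagram) :
      ptilde θ (n + 2) lam = ∑ k ∈ range (n + 2), α k * pstarTheta θ k lam :=
    ptilde_eq_sum_choose_mul_pstarTheta θ lam (by omega)
  constructor
  · have htop : α (n + 1) = θ * ((n + 2 : ℕ) : ℝ) := by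
      simp only [α, Nat.choose_succ_self_right, show n + 2 - (n + 1) = 1 by omega, pow_one,
        mul_comm]
    refine ⟨α, fun lam => ?_⟩
    rw [hexpand, sum_range_succ, sum_range_succ', sum_Icc_one_eq_sum_range, pstarTheta_zero,
      Pi.zero_apply, htop, show n + 2 - 1 = n + 1 by omega, Nat.add_sub_cancel]
    ring
  · have hfun : ptilde θ (n + 2) = ∑ k ∈ range (n + 2), α k • pstarTheta θ k := by
      funext lam
      simp only [hexpand, Finset.sum_apply, Pi.smul_apply, smul_eq_mul]
    rw [hfun]
    exact Submodule.sum_mem _ fun k hk =>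
      Submodule.smul_mem _ _ (pstarTheta_mem_AfilTheta θ (by rw [mem_range] at hk; omega))

/-- For `m ≥ 2`, `p̃_m = θ·m·p*_{m-1;θ} + ∑_{l=1}^{m-2} α_l p*_{l;θ}` for some real
constants `α_l`; in particular `p̃_m` is θ-regular of degree at most `m - 1`. -/
theorem ptilde_eq_theta_regular (θ : ℝ) (hθ : 0 < θ) (m : ℕ) (hm : 2 ≤ m) :
    (∃ α : ℕ → ℝ, ∀ lam : YoungDiagram,
      ptilde θ m lam = θ * (m : ℝ) * pstarTheta θ (m - 1) lam +
        ∑ l ∈ Finset.Icc 1 (m - 2), α l * pstarTheta θ l lam) ∧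
    ptilde θ m ∈ AfilTheta θ (m - 1) :=
  ptilde_eq_theta_regular_general θ m hm
end
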